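/- arXiv:2504.17743 — 5 statements merged into one kernel-verified Lean document; each statement's English description precedes it below -/
import Mathlib

section
/- Let d = (d_1, ..., d_n) be a non-increasing sequence of non-negative integers with even sum, with sum at most 4(n-1), n > 4, d_1 ≤ n-1, d_n ≥ 2, and d_4 ≥ 3. Then d is graphical, i.e., for each r in [1, n-1], the Erdős–Gallai inequality sum_{i=1}^r d_i ≤ r(r-1) + sum_{i=r+1}^n min(r, d_i) holds. -/
/-!
For `r ≤ 2` every tail entry has `min r dᵢ = r`, so the right-hand side equals `r(n - 1) ≥ r d₁`,
which bounds the head sum. For `r ≥ 3`, writing the head sum as the total minus the tail and using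
`∑ dᵢ ≤ 4(n - 1)`, it suffices that `4(n - 1) ≤ r(r - 1) + ∑_{i > r} (dᵢ + min r dᵢ)`. Every summand
is at least `4` since `dᵢ ≥ 2`; this is enough for `r ≥ 4` because `4(r - 1) ≤ r(r - 1)`, and for
`r = 3` the missing `2` comes from `d₄ + min 3 d₄ ≥ 6`.
-/

open Finset

theorem Nat.sum_Icc_one_add_sum_Icc {M : Type*} [AddCommMonoid M] (f : ℕ → M) {r n : ℕ}
    (hr : r ≤ n) : ∑ i ∈ Icc 1 r, f i + ∑ i ∈ Icc (r + 1) n, f i = ∑ i ∈ Icc 1 n, f i := by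
  simpa only [← Icc_add_one_left_eq_Ioc, zero_add] using sum_Ioc_consecutive f r.zero_le hr

theorem Nat.mul_le_sum_Icc {f : ℕ → ℕ} {a b c : ℕ} (h : ∀ i ∈ Icc a b, c ≤ f i) :
    (b + 1 - a) * c ≤ ∑ i ∈ Icc a b, f i := by
  simpa [Nat.card_Icc] using card_nsmul_le_sum _ f c h

section ErdosGallai

variable {n r : ℕ} {d : ℕ → ℕ}

theorem erdosGallai_of_tail_ge (hmono : ∀ i j, 1 ≤ i → i ≤ j → j ≤ n → d j ≤ d i)
    (hd1 : d 1 ≤ n - 1) (hr : r ≤ n) (htail : ∀ i ∈ Icc (r + 1) n, r ≤ d i) :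
    ∑ i ∈ Icc 1 r, d i ≤ r * (r - 1) + ∑ i ∈ Icc (r + 1) n, min r (d i) := by
  obtain rfl | hr1 := r.eq_zero_or_pos
  · simp
  have hhead : ∑ i ∈ Icc 1 r, d i ≤ r * d 1 := by
    have := sum_le_card_nsmul (Icc 1 r) d (d 1) fun i hi ↦ by
      rw [mem_Icc] at hi
      exact hmono 1 i le_rfl hi.1 (hi.2.trans hr)
    rwa [Nat.card_Icc, add_tsub_cancel_right, smul_eq_mul] at this
  have htail_eq : ∑ i ∈ Icc (r + 1) n, min r (d i) = (n - r) * r := by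
    rw [sum_congr rfl fun i hi ↦ min_eq_left (htail i hi)]
    simp [Nat.card_Icc]
  have hsplit : n - 1 = (r - 1) + (n - r) := by omega
  calc ∑ i ∈ Icc 1 r, d i ≤ r * (n - 1) := hhead.trans (Nat.mul_le_mul_left r hd1)
    _ = r * (r - 1) + ∑ i ∈ Icc (r + 1) n, min r (d i) := by
      rw [htail_eq, hsplit, Nat.mul_add, Nat.mul_comm (n - r)]

theorem erdosGallai_of_sum_le (hr : r ≤ n)
    (h : ∑ i ∈ Icc 1 n, d i ≤ r * (r - 1) + ∑ i ∈ Icc (r + 1) n, (d i + min r (d i))) :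
    ∑ i ∈ Icc 1 r, d i ≤ r * (r - 1) + ∑ i ∈ Icc (r + 1) n, min r (d i) := by
  rw [← Nat.sum_Icc_one_add_sum_Icc d hr, sum_add_distrib] at h
  omega

end ErdosGallai

theorem stmt0_general (n : ℕ) (d : ℕ → ℕ)
    (hmono : ∀ i j, 1 ≤ i → i ≤ j → j ≤ n → d j ≤ d i)
    (hsum : ∑ i ∈ Finset.Icc 1 n, d i ≤ 4 * (n - 1))
    (hd1 : d 1 ≤ n - 1) (hdn : 2 ≤ d n) (hd4 : 3 ≤ d 4) :
    ∀ r, 1 ≤ r → r ≤ n - 1 →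
      ∑ i ∈ Finset.Icc 1 r, d i ≤ r * (r - 1) + ∑ i ∈ Finset.Icc (r + 1) n, min r (d i) := by
  intro r _ hrn
  have hd2_tail : ∀ i ∈ Icc (r + 1) n, 2 ≤ d i := fun i hi ↦ by
    rw [mem_Icc] at hi
    exact hdn.trans (hmono i n (by omega) hi.2 le_rfl)
  obtain hr2 | hr3 := le_or_gt r 2
  · exact erdosGallai_of_tail_ge hmono hd1 (by omega) fun i hi ↦ hr2.trans (hd2_tail i hi)
  refine erdosGallai_of_sum_le (by omega) (hsum.trans ?_)
  obtain rfl | hr4 : r = 3 ∨ 4 ≤ r := by omega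
  · have hrest : (n + 1 - 5) * 4 ≤ ∑ i ∈ Icc 5 n, (d i + min 3 (d i)) :=
      Nat.mul_le_sum_Icc fun i hi ↦ by
        have := hd2_tail i (Icc_subset_Icc (by omega) le_rfl hi)
        omega
    have hsplit : Icc (3 + 1) n = insert 4 (Icc 5 n) :=
      (insert_Icc_add_one_left_eq_Icc (by omega)).symm
    rw [hsplit, sum_insert (by simp)]
    omega
  · have hterms : (n + 1 - (r + 1)) * 4 ≤ ∑ i ∈ Icc (r + 1) n, (d i + min r (d i)) :=
      Nat.mul_le_sum_Icc fun i hi ↦ by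
        have := hd2_tail i hi
        omega
    have hquad : 4 * (r - 1) ≤ r * (r - 1) := Nat.mul_le_mul_right _ hr4
    omega

/-- sufficient condition (Corollary: realizable if `d₄ ≥ 3`) for the
Erdős–Gallai inequalities. Degree sequence `d` indexed by `1, …, n`. -/
theorem stmt0 (n : ℕ) (d : ℕ → ℕ)
    (hmono : ∀ i j, 1 ≤ i → i ≤ j → j ≤ n → d j ≤ d i)
    (heven : Even (∑ i ∈ Finset.Icc 1 n, d i))
    (hsum : ∑ i ∈ Finset.Icc 1 n, d i ≤ 4 * (n - 1))
    (hn : 4 < n) (hd1 : d 1 ≤ n - 1) (hdn : 2 ≤ d n) (hd4 : 3 ≤ d 4) :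
    ∀ r, 1 ≤ r → r ≤ n - 1 →
      ∑ i ∈ Finset.Icc 1 r, d i ≤ r * (r - 1) + ∑ i ∈ Finset.Icc (r + 1) n, min r (d i) :=
  stmt0_general n d hmono hsum hd1 hdn hd4
end

section
/- Let d = (d_1, ..., d_n) be a non-increasing sequence of non-negative integers with sum exactly 4(n-1) - 2, n > 4, d_1 ≤ n-1, d_{n-1} ≥ 2, d_n ≥ 1, and d_4 ≥ 3. Then for each r in [1, n-1], the Erdős–Gallai inequality sum_{i=1}^r d_i ≤ r(r-1) + sum_{i=r+1}^n min(r, d_i) holds, so d is graphical. -/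
/-!
Moving the head sum across, the Erdős–Gallai inequality at `r` says
`4(n-1) - 2 ≤ r(r-1) + ∑_{i>r} (d_i + min(r, d_i))`. For `r ≥ 2` every tail term is at least `4`
except the last one, which is at least `2`; this suffices as soon as `(r-1)(r-4) ≥ 0`, and for
`r = 2, 3` the degrees `d_3, d_4 ≥ 3` make up the difference. For `r = 1` the inequality is
`d_1 ≤ n - 1`.
-/

open Finset

lemma sum_Icc_le_add_sum_Icc_iff {f g : ℕ → ℕ} {r n : ℕ} (hrn : r ≤ n) (K : ℕ) :
    ∑ i ∈ Icc 1 r, f i ≤ K + ∑ i ∈ Icc (r + 1) n, g i ↔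
      ∑ i ∈ Icc 1 n, f i ≤ K + ∑ i ∈ Ioc r n, (f i + g i) := by
  have hIcc (m : ℕ) : Icc 1 m = Ioc 0 m := Icc_add_one_left_eq_Ioc 0 m
  rw [Icc_add_one_left_eq_Ioc, sum_add_distrib, hIcc, hIcc,
    ← sum_Ioc_consecutive f (Nat.zero_le r) hrn]
  omega

lemma le_sum_Ioc_add_min {d : ℕ → ℕ} {a n r : ℕ} (hr : 2 ≤ r) (han : a < n)
    (hd_two : ∀ i, a < i → i < n → 2 ≤ d i) (hdn : 1 ≤ d n) :
    4 * (n - 1 - a) + 2 ≤ ∑ i ∈ Ioc a n, (d i + min r (d i)) := by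
  obtain ⟨m, rfl⟩ : ∃ m, n = m + 1 := ⟨n - 1, by omega⟩
  have hbody := card_nsmul_le_sum (Ioc a m) (fun i => d i + min r (d i)) 4 fun i hi => by
    rw [mem_Ioc] at hi
    have := hd_two i hi.1 (by omega)
    omega
  rw [Nat.card_Ioc, smul_eq_mul] at hbody
  rw [sum_Ioc_succ_top (by omega)]
  omega

/-- Erdős–Gallai inequalities for sequences with sum `4(n-1) - 2`. -/
theorem stmt1 (n : ℕ) (d : ℕ → ℕ)
    (hmono : ∀ i j, 1 ≤ i → i ≤ j → j ≤ n → d j ≤ d i)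
    (hsum : ∑ i ∈ Finset.Icc 1 n, d i = 4 * (n - 1) - 2)
    (hn : 4 < n) (hd1 : d 1 ≤ n - 1) (hdn1 : 2 ≤ d (n - 1)) (hdn : 1 ≤ d n)
    (hd4 : 3 ≤ d 4) :
    ∀ r, 1 ≤ r → r ≤ n - 1 →
      ∑ i ∈ Finset.Icc 1 r, d i ≤ r * (r - 1) + ∑ i ∈ Finset.Icc (r + 1) n, min r (d i) := by
  intro r hr1 hrn
  have hd_one : ∀ i, 1 ≤ i → i ≤ n → 1 ≤ d i := fun i hi hin => hdn.trans (hmono i n hi hin le_rfl)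
  have hd_two : ∀ i, 1 ≤ i → i < n → 2 ≤ d i := fun i hi hin =>
    hdn1.trans (hmono i (n - 1) hi (by omega) (by omega))
  obtain rfl | hr2 := hr1.eq_or_lt
  · have hmin := card_nsmul_le_sum (Icc 2 n) (fun i => min 1 (d i)) 1 fun i hi => by
      rw [mem_Icc] at hi
      exact le_min le_rfl (hd_one i (by omega) hi.2)
    simp only [Nat.card_Icc, smul_eq_mul, mul_one] at hmin
    simp only [Icc_self, sum_singleton, Nat.reduceAdd]
    omega
  rw [sum_Icc_le_add_sum_Icc_iff (by omega), hsum]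
  have htail (a : ℕ) (hra : r ≤ a) (han : a < n) :=
    le_sum_Ioc_add_min (a := a) hr2 han (fun i hi hin => hd_two i (by omega) hin) hdn
  rcases (show r = 2 ∨ r = 3 ∨ 4 ≤ r by omega) with rfl | rfl | hr4
  · rw [← sum_Ioc_consecutive _ (show 2 ≤ 4 by norm_num) hn.le]
    simp only [sum_Ioc_succ_top, Nat.reduceLeDiff, Ioc_self, sum_empty, zero_add, Nat.reduceAdd]
    have htail4 := htail 4 (by norm_num) hn
    have hd3 : 3 ≤ d 3 := hd4.trans (hmono 3 4 (by norm_num) (by norm_num) hn.le)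
    omega
  · rw [← sum_Ioc_consecutive _ (show 3 ≤ 4 by norm_num) hn.le]
    simp only [sum_Ioc_succ_top, Nat.reduceLeDiff, Ioc_self, sum_empty, zero_add, Nat.reduceAdd]
    have htail4 := htail 4 (by norm_num) hn
    omega
  · have htailr := htail r le_rfl (by omega)
    have hquad : 4 * (r - 1) ≤ r * (r - 1) := Nat.mul_le_mul_right _ hr4
    omega
end

section
/- A degree sequence d = (d_1, ..., d_n) with n ≥ 1 is multigraphical (realizable as a loopless multigraph) if and only if sum_{i=1}^n d_i is even and d_1 ≤ sum_{i=2}^n d_i. -/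
/-- A loopless multigraph on `Fin n` is encoded by its edge-multiplicity function `M`,
which is symmetric and zero on the diagonal.  `d` is multigraphical if some such `M`
realizes it as the degree sequence. -/
def IsMultigraphical {n : ℕ} (d : Fin n → ℕ) : Prop :=
  ∃ M : Fin n → Fin n → ℕ,
    (∀ u v, M u v = M v u) ∧ (∀ v, M v v = 0) ∧ (∀ v, ∑ u, M v u = d v)

/-!
Necessity: the degree sum counts every edge twice, and each edge at vertex `v` is also an edge at
its other endpoint, so `d v` is at most the sum of the other degrees.

Sufficiency, by induction on the degree sum `S`: the condition `d₁ ≤ d₂ + ⋯ + dₙ` says that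
`2 * d v ≤ S` for every `v`. Join a vertex `i` of maximal degree to any other vertex `j` of
positive degree and delete that edge. Every vertex other than `i` and `j` still satisfies the
condition for `S - 2`: otherwise `2 * d v = S` by parity, while `d i + d j + d v ≤ S` with
`d v ≤ d i` and `d j ≥ 1`.
-/

open Finset

theorem even_sum_sum_of_symm {α : Type*} [Fintype α] (M : α → α → ℕ)
    (hsym : ∀ u v, M u v = M v u) (hdiag : ∀ v, M v v = 0) : Even (∑ v, ∑ u, M v u) := by
  rw [← ZMod.natCast_eq_zero_iff_even, ← sum_product', Nat.cast_sum]
  refine sum_ninvolution Prod.swap (fun p => ?_) (fun p hp hswap => ?_)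
    (fun _ => mem_univ _) Prod.swap_swap
  · rw [Prod.fst_swap, Prod.snd_swap, hsym, ← two_mul]
    exact mul_eq_zero_of_left (by decide) _
  · obtain ⟨v, u⟩ := p
    obtain ⟨rfl, -⟩ : u = v ∧ v = u := by simpa using hswap
    exact hp (by simp [hdiag])

theorem sum_add_single_add_single {ι : Type*} [Fintype ι] [DecidableEq ι] (d : ι → ℕ)
    (i j : ι) : ∑ v, (d + Pi.single i 1 + Pi.single j 1 : ι → ℕ) v = ∑ v, d v + 2 := by
  simp [sum_add_distrib]

theorem add_add_le_sum_of_ne {ι : Type*} [Fintype ι] [DecidableEq ι] (d : ι → ℕ) {i j k : ι}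
    (hij : i ≠ j) (hik : i ≠ k) (hjk : j ≠ k) : d i + d j + d k ≤ ∑ v, d v := by
  calc d i + d j + d k = ∑ v ∈ {i, j, k}, d v := by
        rw [sum_insert (by simp [hij, hik]), sum_pair hjk, add_assoc]
    _ ≤ ∑ v, d v := sum_le_sum_of_subset (subset_univ _)

namespace IsMultigraphical

variable {n : ℕ} {d : Fin n → ℕ}

theorem even_sum (hd : IsMultigraphical d) : Even (∑ v, d v) := by
  obtain ⟨M, hsym, hdiag, hdeg⟩ := hd
  simpa only [hdeg] using even_sum_sum_of_symm M hsym hdiag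

theorem le_sum_erase (hd : IsMultigraphical d) (v : Fin n) :
    d v ≤ ∑ u ∈ univ.erase v, d u := by
  obtain ⟨M, hsym, hdiag, hdeg⟩ := hd
  calc d v = ∑ u ∈ univ.erase v, M v u := by
        rw [← hdeg, ← add_sum_erase _ _ (mem_univ v), hdiag, zero_add]
    _ ≤ ∑ u ∈ univ.erase v, d u := sum_le_sum fun u _ => by
        rw [hsym, ← hdeg]
        exact single_le_sum (fun _ _ => Nat.zero_le _) (mem_univ v)

theorem zero : IsMultigraphical (0 : Fin n → ℕ) :=
  ⟨0, fun _ _ => rfl, fun _ => rfl, fun _ => by simp⟩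

theorem add_edge (hd : IsMultigraphical d) {i j : Fin n} (hij : i ≠ j) :
    IsMultigraphical (d + Pi.single i 1 + Pi.single j 1) := by
  obtain ⟨M, hsym, hdiag, hdeg⟩ := hd
  refine ⟨fun v u => M v u + if s(v, u) = s(i, j) then 1 else 0, fun u v => ?_, fun v => ?_,
    fun v => ?_⟩
  · simp only [hsym u v, Sym2.eq_swap]
  · have hdiag_ne : s(v, v) ≠ s(i, j) := fun h =>
      hij (Sym2.mk_isDiag_iff.mp (h ▸ Sym2.mk_isDiag_iff.mpr rfl))
    simp only [hdiag, hdiag_ne, if_false]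
  · rw [sum_add_distrib, hdeg]
    by_cases hvi : v = i <;> by_cases hvj : v = j <;> simp_all

end IsMultigraphical

variable {n : ℕ} {d : Fin n → ℕ}

theorem exists_eq_add_edge_of_two_mul_le (heven : Even (∑ v, d v))
    (hle : ∀ v, 2 * d v ≤ ∑ u, d u) (hd : d ≠ 0) :
    ∃ (d' : Fin n → ℕ) (i j : Fin n), i ≠ j ∧ d = d' + Pi.single i 1 + Pi.single j 1 ∧
      ∀ v, 2 * d' v ≤ ∑ u, d' u := by
  obtain ⟨w, hw⟩ : ∃ w, d w ≠ 0 := Function.ne_iff.mp hd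
  have : Nonempty (Fin n) := ⟨w⟩
  obtain ⟨i, hi⟩ := Finite.exists_max d
  have hdi : 0 < d i := (Nat.pos_of_ne_zero hw).trans_le (hi w)
  have hsplit := add_sum_erase univ d (mem_univ i)
  have hrest : ∑ u ∈ univ.erase i, d u ≠ 0 := by
    have := hle i
    omega
  obtain ⟨j, hj, hdj⟩ := exists_ne_zero_of_sum_ne_zero hrest
  have hji : j ≠ i := ne_of_mem_erase hj
  obtain ⟨d', hdecomp⟩ : ∃ d' : Fin n → ℕ, d = d' + Pi.single i 1 + Pi.single j 1 := by
    refine ⟨d - Pi.single i 1 - Pi.single j 1, funext fun v => ?_⟩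
    by_cases hvi : v = i <;> by_cases hvj : v = j <;> simp_all <;> omega
  refine ⟨d', i, j, hji.symm, hdecomp, fun v => ?_⟩
  have hsum := sum_add_single_add_single d' i j
  rw [← hdecomp] at hsum
  have hdv : d v = d' v + (if v = i then 1 else 0) + (if v = j then 1 else 0) := by
    simpa only [Pi.add_apply, Pi.single_apply] using congrFun hdecomp v
  obtain ⟨k, hk⟩ := heven
  split_ifs at hdv with hvi hvj hvj
  · exact absurd (hvi ▸ hvj) hji.symm
  · have := hle v
    omega
  · have := hle v
    omega
  · have := add_add_le_sum_of_ne d (Ne.symm hji) (Ne.symm hvi) (Ne.symm hvj)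
    have := hi v
    omega

theorem isMultigraphical_of_even_of_two_mul_le (heven : Even (∑ v, d v))
    (hle : ∀ v, 2 * d v ≤ ∑ u, d u) : IsMultigraphical d := by
  induction hS : ∑ v, d v using Nat.strong_induction_on generalizing d with
  | _ S ih =>
  subst hS
  obtain rfl | hd := eq_or_ne d 0
  · exact .zero
  obtain ⟨d', i, j, hij, rfl, hle'⟩ := exists_eq_add_edge_of_two_mul_le heven hle hd
  rw [sum_add_single_add_single] at heven ih
  exact (ih _ (by omega) (by simpa [Nat.even_add] using heven) hle' rfl).add_edge hij

/-- Hakimi's characterization of multigraphical sequences. -/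
theorem stmt2 (n : ℕ) (hn : 1 ≤ n) (d : Fin n → ℕ) (hmono : Antitone d) :
    IsMultigraphical d ↔
      (Even (∑ i, d i) ∧
        d ⟨0, hn⟩ ≤ ∑ i ∈ Finset.univ.erase ⟨0, hn⟩, d i) := by
  refine ⟨fun hd => ⟨hd.even_sum, hd.le_sum_erase _⟩, fun ⟨heven, hle⟩ =>
    isMultigraphical_of_even_of_two_mul_le heven fun v => ?_⟩
  have hv : d v ≤ d ⟨0, hn⟩ := hmono (Nat.zero_le _)
  have := add_sum_erase univ d (mem_univ ⟨0, hn⟩)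
  omega
end

section
/- Let G be a connected graph on n > 2 vertices containing two distinct vertices of degree 1. Then G does not admit a simple proper time-labeling making it temporally connected. Equivalently: if u and v are distinct degree-1 vertices of G with unique incident edges e_u and e_v, then any labeling λ of the edges of G by natural numbers under which every ordered pair of vertices is connected by a path with strictly increasing labels must satisfy both λ(e_u) < λ(e_v) and λ(e_v) < λ(e_u), a contradiction. -/
/-!
Let `e_u`, `e_v` be the pendant edges at `u` and `v`. A temporal walk from `u` to `v` starts with
`e_u` and ends with `e_v`, so `λ(e_u) < λ(e_v)` as soon as `e_u ≠ e_v`; the walk from `v` to `u`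
gives the reverse inequality. If instead `e_u = e_v`, then `{u, v}` is closed under adjacency and a
third vertex cannot reach it.
-/

open SimpleGraph

theorem List.head_lt_getLast_of_isChain_map {β α : Type*} [Preorder α] {f : β → α} {l : List β}
    (h : (l.map f).IsChain (· < ·)) (hl : l ≠ []) (hne : l.head hl ≠ l.getLast hl) :
    f (l.head hl) < f (l.getLast hl) := by
  match l, h, hl, hne with
  | [_], _, _, hne => exact absurd rfl hne
  | x :: y :: t, h, _, _ =>
    have hpw : ((x :: y :: t).map f).Pairwise (· < ·) := List.isChain_iff_pairwise.mp h
    rw [List.pairwise_map, List.pairwise_cons] at hpw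
    exact hpw.1 _ (List.getLast_mem (List.cons_ne_nil y t))

namespace SimpleGraph.Walk

variable {V : Type*} {G : SimpleGraph V}

theorem end_mem_of_adj_closed {S : Set V} (hS : ∀ x ∈ S, ∀ y, G.Adj x y → y ∈ S) :
    ∀ {a b : V} (_ : G.Walk a b), a ∈ S → b ∈ S
  | _, _, nil, ha => ha
  | _, _, cons h p, ha => end_mem_of_adj_closed hS p (hS _ ha _ h)

theorem lt_of_isChain_map_edges {α : Type*} [Preorder α] {lab : Sym2 V → α} {a b c d : V}
    (p : G.Walk a b) (hp : (p.edges.map lab).IsChain (· < ·)) (hab : a ≠ b)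
    (ha : ∀ y, G.Adj a y → y = c) (hb : ∀ y, G.Adj b y → y = d) (hne : s(a, c) ≠ s(b, d)) :
    lab s(a, c) < lab s(b, d) := by
  have hnil : ¬p.Nil := fun h => hab h.eq
  have hhead : p.edges.head (edges_eq_nil.not.mpr hnil) = s(a, c) := by
    rw [head_edges_eq_mk_start_snd, ha _ (adj_snd hnil)]
  have hlast : p.edges.getLast (edges_eq_nil.not.mpr hnil) = s(b, d) := by
    rw [getLast_edges_eq_mk_penultimate_end, hb _ (adj_penultimate hnil).symm, Sym2.eq_swap]
  have hlt := List.head_lt_getLast_of_isChain_map hp _ (by rwa [hhead, hlast])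
  rwa [hhead, hlast] at hlt

end SimpleGraph.Walk

theorem stmt5_general {V : Type*} [Fintype V] (G : SimpleGraph V)
    [DecidableRel G.Adj] (hn : 2 < Fintype.card V)
    (u v : V) (huv : u ≠ v) (hu : G.degree u = 1) (hv : G.degree v = 1) :
    ¬ ∃ lab : Sym2 V → ℕ, ∀ a b : V, a ≠ b →
        ∃ p : G.Walk a b, List.Chain' (· < ·) (p.edges.map lab) := by
  rintro ⟨lab, hlab⟩
  obtain ⟨u', -, hu'_uniq⟩ := degree_eq_one_iff_existsUnique_adj.mp hu
  obtain ⟨v', -, hv'_uniq⟩ := degree_eq_one_iff_existsUnique_adj.mp hv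
  have hpendant : s(u, u') ≠ s(v, v') := by
    intro heq
    classical
    obtain ⟨rfl, rfl⟩ : u = v' ∧ u' = v := by simpa [huv] using heq
    obtain ⟨w, -, hw⟩ := Finset.exists_mem_notMem_of_card_lt_card
      (s := {u, u'}) (t := Finset.univ) (Finset.card_le_two.trans_lt hn)
    obtain ⟨p, -⟩ := hlab u w (by rintro rfl; simp at hw)
    have hclosed : ∀ x ∈ ({u, u'} : Set V), ∀ y, G.Adj x y → y ∈ ({u, u'} : Set V) := by
      rintro x (rfl | rfl) y hxy
      · simp [hu'_uniq y hxy]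
      · simp [hv'_uniq y hxy]
    have hw_mem : w ∈ ({u, u'} : Set V) := p.end_mem_of_adj_closed hclosed (by simp)
    exact hw (by simpa using hw_mem)
  obtain ⟨p, hp⟩ := hlab u v huv
  obtain ⟨q, hq⟩ := hlab v u huv.symm
  exact lt_asymm (p.lt_of_isChain_map_edges hp huv hu'_uniq hv'_uniq hpendant)
    (q.lt_of_isChain_map_edges hq huv.symm hv'_uniq hu'_uniq hpendant.symm)

/-- a connected graph on more than two vertices with two distinct
degree-1 vertices admits no time-labeling under which every ordered pair of distinct
vertices is joined by a walk with strictly increasing labels. -/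
theorem stmt5 {V : Type*} [Fintype V] [DecidableEq V] (G : SimpleGraph V)
    [DecidableRel G.Adj] (hn : 2 < Fintype.card V) (hconn : G.Connected)
    (u v : V) (huv : u ≠ v) (hu : G.degree u = 1) (hv : G.degree v = 1) :
    ¬ ∃ lab : Sym2 V → ℕ, ∀ a b : V, a ≠ b →
        ∃ p : G.Walk a b, List.Chain' (· < ·) (p.edges.map lab) :=
  stmt5_general G hn u v huv hu hv
end

section
/- Let G be a graph on n vertices and 2n - 4 edges that is C4-pivotable, i.e., contains an induced 4-cycle C and two spanning trees T_1, T_2 sharing exactly two edges, both belonging to C. Then the maximum degree of G is at most n - 2. -/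
/-! Suppose some vertex `v` is adjacent to all others. As `ac` and `bd` are not edges, `v` lies off
the cycle, so `v, a, b, c, d` span a wheel with 8 edges. Counting edges gives `G = T₁ ⊔ T₂`. Each
tree induces a forest on these 5 vertices, with at most 4 edges, and the two forests share the 2
common edges, so together they cover at most `4 + 4 - 2 = 6` edges of the wheel. -/

open Finset

namespace SimpleGraph

variable {V : Type*}

lemma IsAcyclic.card_edgeFinset_add_one_le [Fintype V] [Nonempty V] {H : SimpleGraph V}
    [Fintype H.edgeSet] (hH : H.IsAcyclic) : #H.edgeFinset + 1 ≤ Fintype.card V := by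
  classical
  obtain ⟨F, hHF, -, hF⟩ := connected_top.exists_isTree_le_of_le_of_isAcyclic le_top hH
  rw [← hF.card_edgeFinset]
  gcongr

lemma IsAcyclic.card_edgeFinset_inter_sym2_add_one_le [Fintype V] [DecidableEq V]
    {H : SimpleGraph V} [DecidableRel H.Adj] (hH : H.IsAcyclic) {s : Finset V}
    (hs : s.Nonempty) : #(H.edgeFinset ∩ s.sym2) + 1 ≤ #s := by
  have : Nonempty (s : Set V) := hs.to_set.to_subtype
  rw [← filter_edgeFinset_toFinset_subset, card_filter_edgeFinset_toFinset_subset]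
  simpa using (hH.induce s).card_edgeFinset_add_one_le

lemma card_edgeFinset_inter_sym2_le_of_le_sup [Fintype V] [DecidableEq V]
    {G T₁ T₂ : SimpleGraph V} [DecidableRel G.Adj] [DecidableRel T₁.Adj]
    [DecidableRel T₂.Adj]
    (hG : G ≤ T₁ ⊔ T₂) (ht₁ : T₁.IsAcyclic) (ht₂ : T₂.IsAcyclic) {s : Finset V}
    (hs : s.Nonempty) (hshared : T₁.edgeFinset ∩ T₂.edgeFinset ⊆ s.sym2) :
    #(G.edgeFinset ∩ s.sym2) + #(T₁.edgeFinset ∩ T₂.edgeFinset) + 2 ≤ 2 * #s := by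
  have hcover :
      G.edgeFinset ∩ s.sym2 ⊆ (T₁.edgeFinset ∩ s.sym2) ∪ (T₂.edgeFinset ∩ s.sym2) := by
    intro e he
    obtain ⟨heG, hes⟩ := mem_inter.1 he
    have heT : e ∈ T₁.edgeSet ∪ T₂.edgeSet :=
      edgeSet_sup T₁ T₂ ▸ edgeSet_mono hG (by simpa using heG)
    rcases heT with heT | heT
    · exact mem_union_left _ (mem_inter.2 ⟨by simpa using heT, hes⟩)
    · exact mem_union_right _ (mem_inter.2 ⟨by simpa using heT, hes⟩)
  have hinter : (T₁.edgeFinset ∩ s.sym2) ∩ (T₂.edgeFinset ∩ s.sym2) =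
      T₁.edgeFinset ∩ T₂.edgeFinset := by
    rw [← inter_inter_distrib_right, inter_eq_left.2 hshared]
  have h₁ := ht₁.card_edgeFinset_inter_sym2_add_one_le hs
  have h₂ := ht₂.card_edgeFinset_inter_sym2_add_one_le hs
  have hunion := card_union_add_card_inter (T₁.edgeFinset ∩ s.sym2) (T₂.edgeFinset ∩ s.sym2)
  rw [hinter] at hunion
  have := card_le_card hcover
  omega

lemma IsTree.sup_eq_of_ncard_edgeSet_le [Finite V] {G T₁ T₂ : SimpleGraph V}
    (h₁ : T₁ ≤ G) (h₂ : T₂ ≤ G) (ht₁ : T₁.IsTree) (ht₂ : T₂.IsTree)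
    (hG : G.edgeSet.ncard + (T₁.edgeSet ∩ T₂.edgeSet).ncard ≤ 2 * (Nat.card V - 1)) :
    T₁ ⊔ T₂ = G := by
  have hcard₁ := (isTree_iff_connected_and_card.1 ht₁).2
  have hcard₂ := (isTree_iff_connected_and_card.1 ht₂).2
  rw [Nat.card_coe_set_eq] at hcard₁ hcard₂
  have hunion := Set.ncard_union_add_ncard_inter T₁.edgeSet T₂.edgeSet
  rw [← edgeSet_inj, edgeSet_sup]
  exact Set.eq_of_subset_of_ncard_le (Set.union_subset (edgeSet_mono h₁) (edgeSet_mono h₂))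
    (by omega)

lemma IsUniversal.card_edgeFinset_inter_sym2_add_card_le [Fintype V] [DecidableEq V]
    {G : SimpleGraph V} [DecidableRel G.Adj] {v : V} (hv : G.IsUniversal v) {s : Finset V}
    (hvs : v ∉ s) :
    #(G.edgeFinset ∩ s.sym2) + #s ≤ #(G.edgeFinset ∩ (insert v s).sym2) := by
  have hspokes : #(s.image fun x ↦ s(v, x)) = #s :=
    card_image_of_injective _ fun _ _ h ↦ Sym2.congr_right.1 h
  rw [← hspokes, ← card_union_of_disjoint]
  · refine card_le_card (union_subset ?_ ?_)
    · exact inter_subset_inter_left (sym2_mono (subset_insert v s))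
    · intro e he
      obtain ⟨x, hx, rfl⟩ := mem_image.1 he
      have hvx : v ≠ x := fun h ↦ hvs (h ▸ hx)
      exact mem_inter.2 ⟨mem_edgeFinset.2 (hv hvx),
        mk_mem_sym2_iff.2 ⟨mem_insert_self v s, mem_insert_of_mem hx⟩⟩
  · refine Finset.disjoint_left.2 fun e he hspoke ↦ ?_
    obtain ⟨x, -, rfl⟩ := mem_image.1 hspoke
    exact hvs (mk_mem_sym2_iff.1 (mem_inter.1 he).2).1

lemma four_le_card_edgeFinset_inter_sym2_of_cycle [Fintype V] [DecidableEq V]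
    {G : SimpleGraph V} [DecidableRel G.Adj] {a b c d : V}
    (hab : a ≠ b) (hac : a ≠ c) (had : a ≠ d) (hbc : b ≠ c) (hbd : b ≠ d) (hcd : c ≠ d)
    (e1 : G.Adj a b) (e2 : G.Adj b c) (e3 : G.Adj c d) (e4 : G.Adj d a) :
    4 ≤ #(G.edgeFinset ∩ ({a, b, c, d} : Finset V).sym2) := by
  have hcycle : {s(a, b), s(b, c), s(c, d), s(d, a)} ⊆
      G.edgeFinset ∩ ({a, b, c, d} : Finset V).sym2 := by
    simp [insert_subset_iff, e1, e2, e3, e4]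
  refine le_of_eq_of_le ?_ (card_le_card hcycle)
  rw [card_insert_of_notMem, card_insert_of_notMem, card_pair] <;>
    simp [*, hab.symm, hac.symm, had.symm]

end SimpleGraph

open SimpleGraph

/-- a `C₄`-pivotable graph has maximum degree at most `n - 2`. -/
theorem stmt14 {V : Type*} [Fintype V] [DecidableEq V] (G : SimpleGraph V)
    [DecidableRel G.Adj]
    (hn : 4 ≤ Fintype.card V)
    (hm : G.edgeSet.ncard = 2 * Fintype.card V - 4)
    (a b c d : V)
    (hab : a ≠ b) (hac : a ≠ c) (had : a ≠ d) (hbc : b ≠ c) (hbd : b ≠ d) (hcd : c ≠ d)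
    (e1 : G.Adj a b) (e2 : G.Adj b c) (e3 : G.Adj c d) (e4 : G.Adj d a)
    (hnac : ¬ G.Adj a c) (hnbd : ¬ G.Adj b d)
    (T₁ T₂ : SimpleGraph V) (h₁ : T₁ ≤ G) (h₂ : T₂ ≤ G)
    (ht₁ : T₁.IsTree) (ht₂ : T₂.IsTree)
    (hcard : (T₁.edgeSet ∩ T₂.edgeSet).ncard = 2)
    (hsub : T₁.edgeSet ∩ T₂.edgeSet ⊆ {s(a, b), s(b, c), s(c, d), s(d, a)}) :
    ∀ v, G.degree v ≤ Fintype.card V - 2 := by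
  classical
  intro v
  suffices hv : ¬ G.IsUniversal v by
    have := (G.degree_lt_card_sub_one v).2 hv
    omega
  intro hv
  have hvC : v ∉ ({a, b, c, d} : Finset V) := by
    simp only [mem_insert, mem_singleton, not_or]
    refine ⟨?_, ?_, ?_, ?_⟩ <;> rintro rfl
    · exact hnac (hv hac)
    · exact hnbd (hv hbd)
    · exact hnac (hv hac.symm).symm
    · exact hnbd (hv hbd.symm).symm
  have hG : T₁ ⊔ T₂ = G := IsTree.sup_eq_of_ncard_edgeSet_le h₁ h₂ ht₁ ht₂ (by
    rw [hm, hcard, Nat.card_eq_fintype_card]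
    omega)
  have hshared : T₁.edgeFinset ∩ T₂.edgeFinset ⊆ (insert v {a, b, c, d} : Finset V).sym2 := by
    intro e he
    have he' : e ∈ T₁.edgeSet ∩ T₂.edgeSet := by simpa using he
    rcases hsub he' with rfl | rfl | rfl | rfl <;> simp
  have hsharedCard : #(T₁.edgeFinset ∩ T₂.edgeFinset) = 2 := by
    rw [← hcard, ← Set.ncard_coe_finset]
    simp
  have hwheel := card_edgeFinset_inter_sym2_le_of_le_sup hG.ge ht₁.isAcyclic ht₂.isAcyclic
    (insert_nonempty _ _) hshared
  have hspokes := hv.card_edgeFinset_inter_sym2_add_card_le hvC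
  have hcycle := four_le_card_edgeFinset_inter_sym2_of_cycle hab hac had hbc hbd hcd e1 e2 e3 e4
  rw [card_insert_of_notMem hvC] at hwheel
  have := card_le_four (a := a) (b := b) (c := c) (d := d)
  omega
end
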